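/- Characterization of entailment between satisfiable atomic L∘-terms: for BD-satisfiable atomic L∘-terms σ and σ', σ ⊨_BD σ' if and only if (a) every conjunct ∘p of σ' is a conjunct of σ; (b) for every conjunct •p of σ', either •p is a conjunct of σ or both p and ¬p are conjuncts of σ; and (c) for every propositional-literal conjunct l of σ', either l is a conjunct of σ or both l̄ and •l are conjuncts of σ. -/
import Mathlib


inductive FV | T | B | N | F
deriving DecidableEq

open FV

def fneg : FV → FV
  | T => F | F => T | B => B | N => N

def fand : FV → FV → FV
  | T, x => x
  | x, T => x
  | F, _ => F
  | _, F => F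
  | B, B => B
  | N, N => N
  | B, N => F
  | N, B => F

def forr : FV → FV → FV
  | F, x => x
  | x, F => x
  | T, _ => T
  | _, T => T
  | B, B => B
  | N, N => N
  | B, N => T
  | N, B => T

def fcirc : FV → FV
  | T => T | F => T | B => F | N => F

def ftri : FV → FV
  | T => T | B => T | N => F | F => F

inductive Fm
  | var : ℕ → Fm
  | neg : Fm → Fm
  | conj : Fm → Fm → Fm
  | disj : Fm → Fm → Fm
  | circ : Fm → Fm
  | tri : Fm → Fm

def eval (v : ℕ → FV) : Fm → FV
  | .var p => v p
  | .neg φ => fneg (eval v φ)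
  | .conj φ χ => fand (eval v φ) (eval v χ)
  | .disj φ χ => forr (eval v φ) (eval v χ)
  | .circ φ => fcirc (eval v φ)
  | .tri φ => ftri (eval v φ)

/-- designated values -/
def desig (x : FV) : Prop := x = T ∨ x = B

/-- formulas over {¬,∧,∨} -/
def isBD : Fm → Prop
  | .var _ => True
  | .neg φ => isBD φ
  | .conj φ χ => isBD φ ∧ isBD χ
  | .disj φ χ => isBD φ ∧ isBD χ
  | .circ _ => False
  | .tri _ => False

/-- formulas over {¬,∧,∨,∘} -/
def isCircFm : Fm → Prop
  | .var _ => True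
  | .neg φ => isCircFm φ
  | .conj φ χ => isCircFm φ ∧ isCircFm χ
  | .disj φ χ => isCircFm φ ∧ isCircFm χ
  | .circ φ => isCircFm φ
  | .tri _ => False

/-- formulas over {¬,∧,∨,△} -/
def isTriFm : Fm → Prop
  | .var _ => True
  | .neg φ => isTriFm φ
  | .conj φ χ => isTriFm φ ∧ isTriFm χ
  | .disj φ χ => isTriFm φ ∧ isTriFm χ
  | .circ _ => False
  | .tri φ => isTriFm φ

/-- BD entailment between single formulas -/
def ent (φ χ : Fm) : Prop := ∀ v, desig (eval v φ) → desig (eval v χ)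

/-- classical (two-valued) evaluation of {¬,∧,∨}-formulas -/
def evalC (b : ℕ → Bool) : Fm → Bool
  | .var p => b p
  | .neg φ => !(evalC b φ)
  | .conj φ χ => evalC b φ && evalC b χ
  | .disj φ χ => evalC b φ || evalC b χ
  | .circ φ => evalC b φ
  | .tri φ => evalC b φ


/-- atomic L∘-literals: p, ¬p, ∘p, •p -/
inductive CLit
  | pos : ℕ → CLit
  | negl : ℕ → CLit
  | circ : ℕ → CLit
  | bullet : ℕ → CLit
deriving DecidableEq

def clitEval (v : ℕ → FV) : CLit → FV
  | .pos p => v p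
  | .negl p => fneg (v p)
  | .circ p => fcirc (v p)
  | .bullet p => fneg (fcirc (v p))

lemma desig_bullet_of_both : ∀ x : FV, desig x → desig (fneg x) → desig (fneg (fcirc x)) := by intro x; cases x <;> simp [desig, fneg, fcirc]
lemma desig_pos_of : ∀ x : FV, desig (fneg x) → desig (fneg (fcirc x)) → desig x := by intro x; cases x <;> simp [desig, fneg, fcirc]
lemma desig_neg_of : ∀ x : FV, desig x → desig (fneg (fcirc x)) → desig (fneg x) := by intro x; cases x <;> simp [desig, fneg, fcirc]
lemma circ_bullet_absurd : ∀ x : FV, desig (fcirc x) → desig (fneg (fcirc x)) → False := by intro x; cases x <;> simp [desig, fneg, fcirc]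

lemma upd_sat (v : ℕ → FV) (p : ℕ) (x : FV) (σ : List CLit)
    (h : ∀ l ∈ σ, desig (clitEval v l))
    (hp : CLit.pos p ∈ σ → desig x)
    (hn : CLit.negl p ∈ σ → desig (fneg x))
    (hc : CLit.circ p ∈ σ → desig (fcirc x))
    (hb : CLit.bullet p ∈ σ → desig (fneg (fcirc x))) :
    ∀ l ∈ σ, desig (clitEval (Function.update v p x) l) := by
  intro l hl
  cases l with
  | pos q =>
    by_cases hq : q = p
    · subst hq; simpa [clitEval, Function.update] using hp hl
    · simpa [clitEval, Function.update, hq] using h _ hl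
  | negl q =>
    by_cases hq : q = p
    · subst hq; simpa [clitEval, Function.update] using hn hl
    · simpa [clitEval, Function.update, hq] using h _ hl
  | circ q =>
    by_cases hq : q = p
    · subst hq; simpa [clitEval, Function.update] using hc hl
    · simpa [clitEval, Function.update, hq] using h _ hl
  | bullet q =>
    by_cases hq : q = p
    · subst hq; simpa [clitEval, Function.update] using hb hl
    · simpa [clitEval, Function.update, hq] using h _ hl

theorem atomic_circ_term_entailment_characterization (σ σ' : List CLit)
    (hσ : ∃ v : ℕ → FV, ∀ l ∈ σ, desig (clitEval v l))
    (hσ' : ∃ v : ℕ → FV, ∀ l ∈ σ', desig (clitEval v l)) :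
    (∀ v : ℕ → FV, (∀ l ∈ σ, desig (clitEval v l)) → (∀ l ∈ σ', desig (clitEval v l))) ↔
    ((∀ p, CLit.circ p ∈ σ' → CLit.circ p ∈ σ) ∧
     (∀ p, CLit.bullet p ∈ σ' →
        (CLit.bullet p ∈ σ ∨ (CLit.pos p ∈ σ ∧ CLit.negl p ∈ σ))) ∧
     (∀ p, CLit.pos p ∈ σ' →
        (CLit.pos p ∈ σ ∨ (CLit.negl p ∈ σ ∧ CLit.bullet p ∈ σ))) ∧
     (∀ p, CLit.negl p ∈ σ' →
        (CLit.negl p ∈ σ ∨ (CLit.pos p ∈ σ ∧ CLit.bullet p ∈ σ)))) := by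
  obtain ⟨v, hv⟩ := hσ
  constructor
  · intro hent
    refine ⟨?_, ?_, ?_, ?_⟩
    · -- (a) circ
      intro p hp'
      by_contra hcp
      have hsat := upd_sat v p B σ hv (fun _ => Or.inr rfl) (fun _ => Or.inr rfl)
        (fun h => absurd h hcp) (fun _ => Or.inl rfl)
      have := hent _ hsat _ hp'
      simp [clitEval, Function.update, desig, fcirc] at this
    · -- (b) bullet
      intro p hp'
      by_contra hcp
      push_neg at hcp
      obtain ⟨hb, hpn⟩ := hcp
      by_cases hpos : CLit.pos p ∈ σ
      · have hneg : CLit.negl p ∉ σ := fun h => hpn hpos h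
        have hsat := upd_sat v p T σ hv (fun _ => Or.inl rfl)
          (fun h => absurd h hneg) (fun _ => Or.inl rfl) (fun h => absurd h hb)
        have := hent _ hsat _ hp'
        simp [clitEval, Function.update, desig, fcirc, fneg] at this
      · have hsat := upd_sat v p F σ hv (fun h => absurd h hpos)
          (fun _ => Or.inl rfl) (fun _ => Or.inl rfl) (fun h => absurd h hb)
        have := hent _ hsat _ hp'
        simp [clitEval, Function.update, desig, fcirc, fneg] at this
    · -- (c) pos
      intro p hp'
      by_contra hcp
      push_neg at hcp
      obtain ⟨hpos, hnb⟩ := hcp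
      by_cases hbul : CLit.bullet p ∈ σ
      · have hneg : CLit.negl p ∉ σ := fun h => (hnb h) hbul
        have hcirc : CLit.circ p ∉ σ := fun h =>
          circ_bullet_absurd (v p) (hv _ h) (hv _ hbul)
        have hsat := upd_sat v p N σ hv (fun h => absurd h hpos)
          (fun h => absurd h hneg) (fun h => absurd h hcirc) (fun _ => Or.inl rfl)
        have := hent _ hsat _ hp'
        simp [clitEval, Function.update, desig] at this
      · have hsat := upd_sat v p F σ hv (fun h => absurd h hpos)
          (fun _ => Or.inl rfl) (fun _ => Or.inl rfl) (fun h => absurd h hbul)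
        have := hent _ hsat _ hp'
        simp [clitEval, Function.update, desig] at this
    · -- (d) negl
      intro p hp'
      by_contra hcp
      push_neg at hcp
      obtain ⟨hneg, hnb⟩ := hcp
      by_cases hbul : CLit.bullet p ∈ σ
      · have hpos : CLit.pos p ∉ σ := fun h => (hnb h) hbul
        have hcirc : CLit.circ p ∉ σ := fun h =>
          circ_bullet_absurd (v p) (hv _ h) (hv _ hbul)
        have hsat := upd_sat v p N σ hv (fun h => absurd h hpos)
          (fun h => absurd h hneg) (fun h => absurd h hcirc) (fun _ => Or.inl rfl)
        have := hent _ hsat _ hp'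
        simp [clitEval, Function.update, desig, fneg] at this
      · have hsat := upd_sat v p T σ hv (fun _ => Or.inl rfl)
          (fun h => absurd h hneg) (fun _ => Or.inl rfl) (fun h => absurd h hbul)
        have := hent _ hsat _ hp'
        simp [clitEval, Function.update, desig, fneg] at this
  · rintro ⟨hc, hb, hp, hn⟩ w hw l hl
    cases l with
    | pos q =>
      rcases hp q hl with h | ⟨h1, h2⟩
      · exact hw _ h
      · exact desig_pos_of (w q) (hw _ h1) (hw _ h2)
    | negl q =>
      rcases hn q hl with h | ⟨h1, h2⟩
      · exact hw _ h
      · exact desig_neg_of (w q) (hw _ h1) (hw _ h2)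
    | circ q => exact hw _ (hc q hl)
    | bullet q =>
      rcases hb q hl with h | ⟨h1, h2⟩
      · exact hw _ h
      · exact desig_bullet_of_both (w q) (hw _ h1) (hw _ h2)
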